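/- arXiv:2505.03225 — 9 statements merged into one kernel-verified Lean document; each statement's English description precedes it below -/
import Mathlib

section
/- Let F be a CDF of a nonnegative continuous random variable, and for λ>0 and integer m₂=m₂(λ) with m₂/λ→∞ as λ→∞, define the Erlang mixture CDF F^(λ)(t) = Σ_{i=1}^{m₂-1} [F(i/λ) − F((i−1)/λ)] E_i^(λ)(t) + [1 − F((m₂−1)/λ)] E_{m₂}^(λ)(t), where E_i^(λ) is the CDF of an Erlang distribution with shape i and rate λ. Then F^(λ)(t) → F(t) at every continuity point t of F as λ→∞; i.e., a random variable with CDF F^(λ) converges weakly to one with CDF F. -/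
set_option maxHeartbeats 1000000

open Filter

/-- CDF of the Erlang distribution with shape `i ∈ ℕ₊` and rate `l > 0`:
`E_i^{(l)}(t) = 1 - ∑_{k<i} e^{-lt}(lt)^k/k!` for `t ≥ 0`, and `0` for `t < 0`. -/
noncomputable def erlangCDF (i : ℕ) (l t : ℝ) : ℝ :=
  if t < 0 then 0
  else 1 - ∑ k ∈ Finset.range i, Real.exp (-(l * t)) * (l * t) ^ k / (Nat.factorial k)

/-- Erlang mixture approximation
`F^{(l)}(t) = ∑_{i=1}^{m-1} [F(i/l) - F((i-1)/l)] E_i^{(l)}(t) + [1 - F((m-1)/l)] E_m^{(l)}(t)`. -/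
noncomputable def erlangMixtureCDF (F : ℝ → ℝ) (m : ℕ) (l t : ℝ) : ℝ :=
  (∑ i ∈ Finset.range (m - 1),
      (F (((i : ℝ) + 1) / l) - F ((i : ℝ) / l)) * erlangCDF (i + 1) l t)
    + (1 - F (((m : ℝ) - 1) / l)) * erlangCDF m l t

private lemma tsum_q (x : ℝ) : ∑' k : ℕ, x ^ k / (Nat.factorial k) = Real.exp x := by
  rw [Real.exp_eq_exp_ℝ, NormedSpace.exp_eq_tsum_div]

private lemma summable_q (x : ℝ) : Summable (fun k : ℕ => x ^ k / (Nat.factorial k)) :=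
  Real.summable_pow_div_factorial x

private lemma key1 (x : ℝ) (k : ℕ) :
    ((k + 1 : ℕ) : ℝ) * (x ^ (k+1) / (Nat.factorial (k+1))) = x * (x ^ k / (Nat.factorial k)) := by
  have h2 : ((Nat.factorial k : ℝ)) ≠ 0 := Nat.cast_ne_zero.mpr k.factorial_ne_zero
  rw [Nat.factorial_succ]
  push_cast
  field_simp
  ring

private lemma mom1 (x : ℝ) : Summable (fun k : ℕ => (k : ℝ) * (x ^ k / (Nat.factorial k))) ∧
    ∑' k : ℕ, (k : ℝ) * (x ^ k / (Nat.factorial k)) = x * Real.exp x := by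
  have hs : Summable (fun k : ℕ => (k : ℝ) * (x ^ k / (Nat.factorial k))) := by
    refine (summable_nat_add_iff 1).mp ?_
    refine Summable.congr ((summable_q x).mul_left x) ?_
    intro k; exact (key1 x k).symm
  refine ⟨hs, ?_⟩
  rw [Summable.tsum_eq_zero_add hs]
  simp only [Nat.cast_zero, zero_mul, zero_add]
  calc ∑' k : ℕ, ((k + 1 : ℕ) : ℝ) * (x ^ (k+1) / (Nat.factorial (k+1)))
      = ∑' k : ℕ, x * (x ^ k / (Nat.factorial k)) := by
        exact tsum_congr fun k => key1 x k
    _ = x * Real.exp x := by rw [tsum_mul_left, tsum_q]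

private lemma key2 (x : ℝ) (k : ℕ) :
    ((k + 2 : ℕ) : ℝ) * (((k + 2 : ℕ) : ℝ) - 1) * (x ^ (k+2) / (Nat.factorial (k+2)))
      = x ^ 2 * (x ^ k / (Nat.factorial k)) := by
  have h2 : ((Nat.factorial k : ℝ)) ≠ 0 := Nat.cast_ne_zero.mpr k.factorial_ne_zero
  rw [Nat.factorial_succ, Nat.factorial_succ]
  push_cast
  field_simp
  ring

private lemma mom2 (x : ℝ) :
    Summable (fun k : ℕ => (k : ℝ) * ((k : ℝ) - 1) * (x ^ k / (Nat.factorial k))) ∧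
    ∑' k : ℕ, (k : ℝ) * ((k : ℝ) - 1) * (x ^ k / (Nat.factorial k)) = x ^ 2 * Real.exp x := by
  have hs : Summable (fun k : ℕ => (k : ℝ) * ((k : ℝ) - 1) * (x ^ k / (Nat.factorial k))) := by
    refine (summable_nat_add_iff 2).mp ?_
    refine Summable.congr ((summable_q x).mul_left (x ^ 2)) ?_
    intro k; exact (key2 x k).symm
  refine ⟨hs, ?_⟩
  have h := Summable.sum_add_tsum_nat_add (f := fun k : ℕ => (k : ℝ) * ((k : ℝ) - 1) * (x ^ k / (Nat.factorial k))) 2 hs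
  have h0 : ∑ i ∈ Finset.range 2, (i : ℝ) * ((i : ℝ) - 1) * (x ^ i / (Nat.factorial i)) = 0 := by
    simp [Finset.sum_range_succ]
  rw [h0, zero_add] at h
  rw [← h]
  calc ∑' k : ℕ, ((k + 2 : ℕ) : ℝ) * (((k + 2 : ℕ) : ℝ) - 1) * (x ^ (k+2) / (Nat.factorial (k+2)))
      = ∑' k : ℕ, x ^ 2 * (x ^ k / (Nat.factorial k)) := tsum_congr fun k => key2 x k
    _ = x ^ 2 * Real.exp x := by rw [tsum_mul_left, tsum_q]

private lemma momV (x : ℝ) :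
    Summable (fun k : ℕ => ((k : ℝ) - x) ^ 2 * (x ^ k / (Nat.factorial k))) ∧
    ∑' k : ℕ, ((k : ℝ) - x) ^ 2 * (x ^ k / (Nat.factorial k)) = x * Real.exp x := by
  have hdecomp : ∀ k : ℕ, ((k : ℝ) - x) ^ 2 * (x ^ k / (Nat.factorial k))
      = (k : ℝ) * ((k : ℝ) - 1) * (x ^ k / (Nat.factorial k))
        + (1 - 2*x) * ((k : ℝ) * (x ^ k / (Nat.factorial k)))
        + x ^ 2 * (x ^ k / (Nat.factorial k)) := by
    intro k; ring
  have hs : Summable (fun k : ℕ => ((k : ℝ) - x) ^ 2 * (x ^ k / (Nat.factorial k))) := by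
    refine Summable.congr (((mom2 x).1.add ((mom1 x).1.mul_left (1 - 2*x))).add
      ((summable_q x).mul_left (x ^ 2))) ?_
    intro k; exact (hdecomp k).symm
  refine ⟨hs, ?_⟩
  calc ∑' k : ℕ, ((k : ℝ) - x) ^ 2 * (x ^ k / (Nat.factorial k))
      = ∑' k : ℕ, ((k : ℝ) * ((k : ℝ) - 1) * (x ^ k / (Nat.factorial k))
        + (1 - 2*x) * ((k : ℝ) * (x ^ k / (Nat.factorial k)))
        + x ^ 2 * (x ^ k / (Nat.factorial k))) := tsum_congr hdecomp
    _ = x ^ 2 * Real.exp x + (1 - 2*x) * (x * Real.exp x) + x ^ 2 * Real.exp x := by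
        rw [Summable.tsum_add ((mom2 x).1.add ((mom1 x).1.mul_left (1 - 2*x))) ((summable_q x).mul_left (x^2)),
          Summable.tsum_add (mom2 x).1 ((mom1 x).1.mul_left (1 - 2*x)), (mom2 x).2, tsum_mul_left, (mom1 x).2,
          tsum_mul_left, tsum_q]
    _ = x * Real.exp x := by ring

private lemma qnn (x : ℝ) (hx : 0 ≤ x) (k : ℕ) : 0 ≤ x ^ k / (Nat.factorial k) := by positivity

private lemma psum_le_one (x : ℝ) (hx : 0 ≤ x) (A : Finset ℕ) :
    ∑ k ∈ A, Real.exp (-x) * x ^ k / (Nat.factorial k) ≤ 1 := by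
  have h1 : ∑ k ∈ A, Real.exp (-x) * x ^ k / (Nat.factorial k)
      = Real.exp (-x) * ∑ k ∈ A, x ^ k / (Nat.factorial k) := by
    rw [Finset.mul_sum]; exact Finset.sum_congr rfl fun k _ => by ring
  rw [h1]
  have h2 : ∑ k ∈ A, x ^ k / (Nat.factorial k) ≤ Real.exp x := by
    rw [← tsum_q x]
    exact Summable.sum_le_tsum A (fun k _ => qnn x hx k) (summable_q x)
  calc Real.exp (-x) * ∑ k ∈ A, x ^ k / (Nat.factorial k)
      ≤ Real.exp (-x) * Real.exp x := by
        exact mul_le_mul_of_nonneg_left h2 (Real.exp_nonneg _)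
    _ = 1 := by rw [← Real.exp_add]; simp

private lemma cheb (x a : ℝ) (hx : 0 ≤ x) (ha : 0 < a) (A : Finset ℕ)
    (hA : ∀ k ∈ A, a ^ 2 ≤ ((k : ℝ) - x) ^ 2) :
    ∑ k ∈ A, Real.exp (-x) * x ^ k / (Nat.factorial k) ≤ x / a ^ 2 := by
  have h1 : ∑ k ∈ A, x ^ k / (Nat.factorial k)
      ≤ (1 / a ^ 2) * ∑ k ∈ A, ((k : ℝ) - x) ^ 2 * (x ^ k / (Nat.factorial k)) := by
    rw [Finset.mul_sum]
    refine Finset.sum_le_sum fun k hk => ?_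
    have := hA k hk
    have hq := qnn x hx k
    have hone : 1 ≤ (a ^ 2)⁻¹ * ((k : ℝ) - x) ^ 2 := by
      rw [le_inv_mul_iff₀ (by positivity), mul_one]; exact this
    rw [one_div, ← mul_assoc]
    calc x ^ k / (Nat.factorial k) = 1 * (x ^ k / (Nat.factorial k)) := (one_mul _).symm
      _ ≤ (a ^ 2)⁻¹ * ((k : ℝ) - x) ^ 2 * (x ^ k / (Nat.factorial k)) :=
          mul_le_mul_of_nonneg_right hone hq
  have h2 : ∑ k ∈ A, ((k : ℝ) - x) ^ 2 * (x ^ k / (Nat.factorial k)) ≤ x * Real.exp x := by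
    rw [← (momV x).2]
    exact Summable.sum_le_tsum A (fun k _ => mul_nonneg (sq_nonneg _) (qnn x hx k)) (momV x).1
  have h3 : ∑ k ∈ A, Real.exp (-x) * x ^ k / (Nat.factorial k)
      = Real.exp (-x) * ∑ k ∈ A, x ^ k / (Nat.factorial k) := by
    rw [Finset.mul_sum]; exact Finset.sum_congr rfl fun k _ => by ring
  rw [h3]
  have key : Real.exp (-x) * ∑ k ∈ A, x ^ k / (Nat.factorial k)
      ≤ Real.exp (-x) * ((1 / a ^ 2) * (x * Real.exp x)) := by
    refine mul_le_mul_of_nonneg_left (h1.trans ?_) (Real.exp_nonneg _)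
    exact mul_le_mul_of_nonneg_left h2 (by positivity)
  refine key.trans (le_of_eq ?_)
  rw [show Real.exp (-x) * (1 / a ^ 2 * (x * Real.exp x))
    = (Real.exp (-x) * Real.exp x) * (x / a ^ 2) by ring, ← Real.exp_add]
  simp

private lemma tail_bound (x : ℝ) (hx : 0 ≤ x) (m : ℕ) (hm : x < m) :
    1 - ∑ k ∈ Finset.range m, Real.exp (-x) * x ^ k / (Nat.factorial k)
      ≤ x / ((m : ℝ) - x) ^ 2 := by
  have hmx : (0:ℝ) < (m : ℝ) - x := by linarith
  have hq := summable_q x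
  have hsum : ∑ k ∈ Finset.range m, x ^ k / (Nat.factorial k)
      + ∑' k : ℕ, x ^ (k + m) / (Nat.factorial (k + m)) = Real.exp x := by
    rw [Summable.sum_add_tsum_nat_add m hq, tsum_q]
  have hps : ∑ k ∈ Finset.range m, Real.exp (-x) * x ^ k / (Nat.factorial k)
      = Real.exp (-x) * ∑ k ∈ Finset.range m, x ^ k / (Nat.factorial k) := by
    rw [Finset.mul_sum]; exact Finset.sum_congr rfl fun k _ => by ring
  have h1 : 1 - ∑ k ∈ Finset.range m, Real.exp (-x) * x ^ k / (Nat.factorial k)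
      = Real.exp (-x) * ∑' k : ℕ, x ^ (k + m) / (Nat.factorial (k + m)) := by
    rw [hps]
    have : (1:ℝ) = Real.exp (-x) * Real.exp x := by rw [← Real.exp_add]; simp
    rw [this, ← hsum]
    ring
  rw [h1]
  have hVs : Summable (fun k : ℕ => (((k + m : ℕ) : ℝ) - x) ^ 2 * (x ^ (k + m) / (Nat.factorial (k + m)))) := by
    exact (summable_nat_add_iff m).mpr (momV x).1
  have hqs : Summable (fun k : ℕ => x ^ (k + m) / (Nat.factorial (k + m))) :=
    (summable_nat_add_iff m).mpr hq
  have h2 : ∑' k : ℕ, x ^ (k + m) / (Nat.factorial (k + m))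
      ≤ (1 / ((m : ℝ) - x) ^ 2) * ∑' k : ℕ, (((k + m : ℕ) : ℝ) - x) ^ 2 * (x ^ (k + m) / (Nat.factorial (k + m))) := by
    rw [← tsum_mul_left]
    refine Summable.tsum_le_tsum (fun k => ?_) hqs (hVs.mul_left _)
    have hk : ((m : ℝ) - x) ^ 2 ≤ (((k + m : ℕ) : ℝ) - x) ^ 2 := by
      have : ((m : ℝ) - x) ≤ ((k + m : ℕ) : ℝ) - x := by
        push_cast; linarith [Nat.cast_nonneg (α := ℝ) k]
      nlinarith
    have hqn := qnn x hx (k + m)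
    have hone : 1 ≤ (((m : ℝ) - x) ^ 2)⁻¹ * (((k + m : ℕ) : ℝ) - x) ^ 2 := by
      rw [le_inv_mul_iff₀ (by positivity), mul_one]; exact hk
    rw [one_div, ← mul_assoc]
    calc x ^ (k+m) / (Nat.factorial (k+m)) = 1 * (x ^ (k+m) / (Nat.factorial (k+m))) := (one_mul _).symm
      _ ≤ (((m : ℝ) - x) ^ 2)⁻¹ * (((k + m : ℕ) : ℝ) - x) ^ 2 * (x ^ (k+m) / (Nat.factorial (k+m))) :=
          mul_le_mul_of_nonneg_right hone hqn
  have h3 : ∑' k : ℕ, (((k + m : ℕ) : ℝ) - x) ^ 2 * (x ^ (k + m) / (Nat.factorial (k + m)))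
      ≤ x * Real.exp x := by
    have := Summable.sum_add_tsum_nat_add (f := fun k : ℕ => ((k : ℝ) - x) ^ 2 * (x ^ k / (Nat.factorial k))) m (momV x).1
    have hnn : 0 ≤ ∑ i ∈ Finset.range m, ((i : ℝ) - x) ^ 2 * (x ^ i / (Nat.factorial i)) :=
      Finset.sum_nonneg fun i _ => mul_nonneg (sq_nonneg _) (qnn x hx i)
    rw [(momV x).2] at this
    linarith
  calc Real.exp (-x) * ∑' k : ℕ, x ^ (k + m) / (Nat.factorial (k + m))
      ≤ Real.exp (-x) * ((1 / ((m : ℝ) - x) ^ 2) * (x * Real.exp x)) := by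
        refine mul_le_mul_of_nonneg_left (h2.trans ?_) (Real.exp_nonneg _)
        exact mul_le_mul_of_nonneg_left h3 (by positivity)
    _ = x / ((m : ℝ) - x) ^ 2 := by
        rw [show Real.exp (-x) * ((1 / ((m : ℝ) - x) ^ 2) * (x * Real.exp x))
          = (Real.exp (-x) * Real.exp x) * (x / ((m : ℝ) - x) ^ 2) by ring, ← Real.exp_add]
        simp

private lemma mixture_eq (F : ℝ → ℝ) (l t : ℝ) (ht : 0 ≤ t) (n : ℕ) :
    erlangMixtureCDF F (n + 1) l t
      = 1 - F 0 - ∑ k ∈ Finset.range (n + 1),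
          Real.exp (-(l * t)) * (l * t) ^ k / (Nat.factorial k) * (1 - F ((k : ℝ) / l)) := by
  have hnlt : ¬ t < 0 := not_lt.mpr ht
  induction n with
  | zero =>
    simp only [erlangMixtureCDF, erlangCDF, if_neg hnlt]
    norm_num [Finset.sum_range_succ]
    ring
  | succ n ih =>
    simp only [erlangMixtureCDF, erlangCDF, if_neg hnlt] at ih ⊢
    have hc1 : ((n + 1 + 1 : ℕ) : ℝ) - 1 = ((n : ℝ) + 1) := by push_cast; ring
    have hc2 : ((n + 1 : ℕ) : ℝ) - 1 = ((n : ℝ)) := by push_cast; ring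
    rw [hc1]
    rw [hc2] at ih
    rw [show n + 1 + 1 - 1 = n + 1 from rfl, show n + 1 - 1 = n from rfl] at *
    set p : ℕ → ℝ := fun k => Real.exp (-(l * t)) * (l * t) ^ k / (Nat.factorial k) with hp
    rw [Finset.sum_range_succ (fun i => (F (((i : ℝ) + 1) / l) - F ((i : ℝ) / l)) *
      (1 - ∑ k ∈ Finset.range (i + 1), p k)) n]
    rw [Finset.sum_range_succ (fun k => p k * (1 - F ((k : ℝ) / l))) (n + 1)]
    rw [Finset.sum_range_succ p (n + 1)]
    push_cast
    linear_combination ih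

/-- If `F` is the CDF of a nonnegative random variable with continuous
distribution, and `m₂ = m₂(λ)` satisfies `m₂/λ → ∞`, then the Erlang mixture CDF `F^{(λ)}`
converges to `F` at every continuity point `t` of `F` as `λ → ∞` (weak convergence). -/
theorem stmt0
    (F : ℝ → ℝ) (hmono : Monotone F) (hcont : Continuous F)
    (hneg : ∀ t < (0 : ℝ), F t = 0) (hlim : Tendsto F atTop (nhds 1))
    (m₂ : ℝ → ℕ) (hm₂pos : ∀ l, 1 ≤ m₂ l)
    (hm₂ : Tendsto (fun l => (m₂ l : ℝ) / l) atTop atTop)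
    (t : ℝ) (ht : ContinuousAt F t) :
    Tendsto (fun l => erlangMixtureCDF F (m₂ l) l t) atTop (nhds (F t)) := by
  -- F 0 = 0
  have hF0 : F 0 = 0 := by
    have h0seq : Tendsto (fun n : ℕ => -(1 / ((n:ℝ) + 1))) atTop (nhds 0) := by
      simpa using (tendsto_one_div_add_atTop_nhds_zero_nat (𝕜 := ℝ)).neg
    have h1 : Tendsto (fun n : ℕ => F (-(1 / ((n:ℝ) + 1)))) atTop (nhds (F 0)) :=
      (hcont.tendsto 0).comp (by simpa using h0seq)
    have h2 : (fun n : ℕ => F (-(1 / ((n:ℝ) + 1)))) = fun _ => (0:ℝ) := by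
      funext n
      refine hneg _ ?_
      have : (0:ℝ) < 1 / ((n:ℝ) + 1) := by positivity
      linarith
    rw [h2] at h1
    exact tendsto_nhds_unique h1 tendsto_const_nhds
  have hFnn : ∀ s : ℝ, 0 ≤ F s := by
    intro s
    rcases lt_or_ge s 0 with h | h
    · rw [hneg s h]
    · rw [← hF0]; exact hmono h
  have hFle : ∀ s : ℝ, F s ≤ 1 := fun s => hmono.ge_of_tendsto hlim s
  rcases lt_or_ge t 0 with htneg | htpos
  · have hzero : (fun l => erlangMixtureCDF F (m₂ l) l t) = fun _ => (0:ℝ) := by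
      funext l
      simp [erlangMixtureCDF, erlangCDF, if_pos htneg]
    rw [hzero, hneg t htneg]
    exact tendsto_const_nhds
  · -- main case
    have hmix : ∀ l : ℝ, erlangMixtureCDF F (m₂ l) l t
        = 1 - ∑ k ∈ Finset.range (m₂ l),
            Real.exp (-(l * t)) * (l * t) ^ k / (Nat.factorial k) * (1 - F ((k : ℝ) / l)) := by
      intro l
      obtain ⟨n, hn⟩ : ∃ n, m₂ l = n + 1 := ⟨m₂ l - 1, (Nat.succ_pred_eq_of_pos (hm₂pos l)).symm⟩
      rw [hn, mixture_eq F l t htpos n, hF0]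
      ring
    have key : Tendsto (fun l => ∑ k ∈ Finset.range (m₂ l),
        Real.exp (-(l * t)) * (l * t) ^ k / (Nat.factorial k) * (1 - F ((k : ℝ) / l)))
        atTop (nhds (1 - F t)) := by
      rw [Metric.tendsto_nhds]
      intro ε hε
      obtain ⟨δ, hδ, hδε⟩ : ∃ δ > 0, ∀ s : ℝ, |s - t| < δ → |F s - F t| < ε / 3 := by
        obtain ⟨δ, hδ, h⟩ := Metric.continuousAt_iff.mp ht (ε / 3) (by linarith)
        exact ⟨δ, hδ, fun s hs => by
          have := h (x := s) (by simpa [Real.dist_eq] using hs)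
          simpa [Real.dist_eq] using this⟩
      have E1 : ∀ᶠ l : ℝ in atTop, (1:ℝ) ≤ l := eventually_ge_atTop 1
      have E2 : ∀ᶠ l : ℝ in atTop, t + 1 ≤ (m₂ l : ℝ) / l := hm₂.eventually_ge_atTop (t + 1)
      have E3 : ∀ᶠ l : ℝ in atTop, t / l < ε / 3 :=
        (tendsto_const_nhds.div_atTop tendsto_id).eventually_lt_const (by linarith)
      have E4 : ∀ᶠ l : ℝ in atTop, t / (l * δ ^ 2) < ε / 3 :=
        (tendsto_const_nhds.div_atTop (tendsto_id.atTop_mul_const (by positivity))).eventually_lt_const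
          (by linarith)
      filter_upwards [E1, E2, E3, E4] with l hl1 hl2 hl3 hl4
      have hl0 : (0:ℝ) < l := by linarith
      have hl0' : l ≠ 0 := ne_of_gt hl0
      have hδ0' : δ ≠ 0 := ne_of_gt hδ
      have hx : 0 ≤ l * t := mul_nonneg hl0.le htpos
      have hml : l * t + l ≤ (m₂ l : ℝ) := by
        have h := (le_div_iff₀ hl0).mp hl2
        nlinarith
      have hm : l * t < (m₂ l : ℝ) := by linarith
      set P : ℕ → ℝ := fun k => Real.exp (-(l * t)) * (l * t) ^ k / (Nat.factorial k) with hP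
      have hPnn : ∀ k, 0 ≤ P k := fun k =>
        div_nonneg (mul_nonneg (Real.exp_nonneg _) (pow_nonneg hx k)) (Nat.cast_nonneg _)
      have hsplit : (∑ k ∈ Finset.range (m₂ l), P k * (1 - F ((k : ℝ) / l))) - (1 - F t)
          = (∑ k ∈ Finset.range (m₂ l), P k * (F t - F ((k : ℝ) / l)))
            - (1 - ∑ k ∈ Finset.range (m₂ l), P k) * (1 - F t) := by
        simp only [mul_sub, mul_one, Finset.sum_sub_distrib, ← Finset.sum_mul]
        ring
      have habs : |∑ k ∈ Finset.range (m₂ l), P k * (F t - F ((k : ℝ) / l))|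
          ≤ ∑ k ∈ Finset.range (m₂ l), P k * |F t - F ((k : ℝ) / l)| := by
        refine (Finset.abs_sum_le_sum_abs _ _).trans (le_of_eq ?_)
        refine Finset.sum_congr rfl fun k _ => ?_
        rw [abs_mul, abs_of_nonneg (hPnn k)]
      set A := (Finset.range (m₂ l)).filter (fun k : ℕ => |(k : ℝ) / l - t| < δ) with hA
      set B := (Finset.range (m₂ l)).filter (fun k : ℕ => ¬ |(k : ℝ) / l - t| < δ) with hB
      have hABsum : ∑ k ∈ A, P k * |F t - F ((k : ℝ) / l)|
          + ∑ k ∈ B, P k * |F t - F ((k : ℝ) / l)|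
          = ∑ k ∈ Finset.range (m₂ l), P k * |F t - F ((k : ℝ) / l)| :=
        Finset.sum_filter_add_sum_filter_not _ _ _
      have hAbound : ∑ k ∈ A, P k * |F t - F ((k : ℝ) / l)| ≤ ε / 3 := by
        calc ∑ k ∈ A, P k * |F t - F ((k : ℝ) / l)|
            ≤ ∑ k ∈ A, P k * (ε / 3) := by
              refine Finset.sum_le_sum fun k hk => ?_
              have hk' := (Finset.mem_filter.mp hk).2
              have h := hδε ((k : ℝ) / l) hk'
              rw [abs_sub_comm] at h
              exact mul_le_mul_of_nonneg_left h.le (hPnn k)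
          _ = (∑ k ∈ A, P k) * (ε / 3) := by rw [← Finset.sum_mul]
          _ ≤ 1 * (ε / 3) :=
              mul_le_mul_of_nonneg_right (psum_le_one (l * t) hx A) (by linarith)
          _ = ε / 3 := one_mul _
      have hBbound : ∑ k ∈ B, P k * |F t - F ((k : ℝ) / l)| ≤ t / (l * δ ^ 2) := by
        calc ∑ k ∈ B, P k * |F t - F ((k : ℝ) / l)|
            ≤ ∑ k ∈ B, P k := by
              refine Finset.sum_le_sum fun k hk => ?_
              have h1 : |F t - F ((k : ℝ) / l)| ≤ 1 := by
                rw [abs_le]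
                constructor <;> [skip; skip] <;>
                  · have := hFnn t; have := hFle t
                    have := hFnn ((k : ℝ) / l); have := hFle ((k : ℝ) / l)
                    linarith
              calc P k * |F t - F ((k : ℝ) / l)| ≤ P k * 1 :=
                    mul_le_mul_of_nonneg_left h1 (hPnn k)
                _ = P k := mul_one _
          _ ≤ (l * t) / (l * δ) ^ 2 := by
              refine cheb (l * t) (l * δ) hx (by positivity) B fun k hk => ?_
              have hk' : δ ≤ |(k : ℝ) / l - t| := not_lt.mp (Finset.mem_filter.mp hk).2
              have h2 : ((k : ℝ) - l * t) = l * ((k : ℝ) / l - t) := by field_simp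
              rw [h2, mul_pow, mul_pow]
              have h3 : δ ^ 2 ≤ ((k : ℝ) / l - t) ^ 2 := by
                nlinarith [sq_abs ((k : ℝ) / l - t), abs_nonneg ((k : ℝ) / l - t)]
              exact mul_le_mul_of_nonneg_left h3 (by positivity)
          _ = t / (l * δ ^ 2) := by field_simp
      have hT2 : (1 - ∑ k ∈ Finset.range (m₂ l), P k) * (1 - F t) ≤ t / l := by
        have h1 : 1 - ∑ k ∈ Finset.range (m₂ l), P k ≤ (l * t) / (((m₂ l : ℕ) : ℝ) - l * t) ^ 2 :=
          tail_bound (l * t) hx (m₂ l) hm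
        have h2 : (l * t) / (((m₂ l : ℕ) : ℝ) - l * t) ^ 2 ≤ (l * t) / l ^ 2 := by
          refine div_le_div_of_nonneg_left hx (by positivity) ?_
          nlinarith
        have h3 : (l * t) / l ^ 2 = t / l := by field_simp
        have h4 : 0 ≤ 1 - F t := by linarith [hFle t]
        have h5 : 1 - F t ≤ 1 := by linarith [hFnn t]
        have h6 : 0 ≤ 1 - ∑ k ∈ Finset.range (m₂ l), P k := by
          linarith [psum_le_one (l * t) hx (Finset.range (m₂ l))]
        calc (1 - ∑ k ∈ Finset.range (m₂ l), P k) * (1 - F t)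
            ≤ (1 - ∑ k ∈ Finset.range (m₂ l), P k) * 1 := mul_le_mul_of_nonneg_left h5 h6
          _ = 1 - ∑ k ∈ Finset.range (m₂ l), P k := mul_one _
          _ ≤ t / l := by rw [← h3]; exact h1.trans h2
      have hT2nn : 0 ≤ (1 - ∑ k ∈ Finset.range (m₂ l), P k) * (1 - F t) := by
        have h6 : 0 ≤ 1 - ∑ k ∈ Finset.range (m₂ l), P k := by
          linarith [psum_le_one (l * t) hx (Finset.range (m₂ l))]
        exact mul_nonneg h6 (by linarith [hFle t])
      rw [Real.dist_eq, hsplit]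
      calc |(∑ k ∈ Finset.range (m₂ l), P k * (F t - F ((k : ℝ) / l)))
            - (1 - ∑ k ∈ Finset.range (m₂ l), P k) * (1 - F t)|
          ≤ |∑ k ∈ Finset.range (m₂ l), P k * (F t - F ((k : ℝ) / l))|
            + |(1 - ∑ k ∈ Finset.range (m₂ l), P k) * (1 - F t)| := abs_sub _ _
        _ ≤ (∑ k ∈ Finset.range (m₂ l), P k * |F t - F ((k : ℝ) / l)|)
            + (1 - ∑ k ∈ Finset.range (m₂ l), P k) * (1 - F t) := by
            rw [abs_of_nonneg hT2nn]
            exact add_le_add_left habs _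
        _ ≤ (ε / 3 + t / (l * δ ^ 2)) + t / l := by
            rw [← hABsum]
            exact add_le_add (add_le_add hAbound hBbound) hT2
        _ < ε := by linarith
    have := tendsto_const_nhds (x := (1:ℝ)) (f := atTop (α := ℝ)) |>.sub key
    rw [show (1:ℝ) - (1 - F t) = F t by ring] at this
    exact this.congr fun l => (hmix l).symm
end

section
/- Consider a continuous-time Markov chain on states {1,…,m+1} with state m+1 absorbing, started at state 1, where from each transient state i ∈ {1,…,m−1} the chain jumps to state i+1 at rate λ(1−p_i(λ)) and to the absorbing state m+1 at rate λ p_i(λ), with p_i(λ) = [F(i/λ) − F((i−1)/λ)]/[1 − F((i−1)/λ)], and from state m it jumps to m+1 at rate λ. Then the probability that absorption occurs after exactly l transitions equals F(l/λ) − F((l−1)/λ) for l ∈ {1,…,m−1}, and equals 1 − F((m−1)/λ) for l = m; consequently the absorption time has CDF equal to the Erlang mixture F^(λ). -/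
/-- The one-step absorption probability `p_i(λ) = [F(i/λ)-F((i-1)/λ)]/[1-F((i-1)/λ)]`. -/
noncomputable def jumpProb (F : ℝ → ℝ) (l : ℝ) (i : ℕ) : ℝ :=
  (F ((i : ℝ) / l) - F (((i : ℝ) - 1) / l)) / (1 - F (((i : ℝ) - 1) / l))

/-- For the CTMC on `{1,…,m+1}` started at `1`, absorbing at `m+1`, with
jump rates `λ(1-p_i(λ))` to `i+1` and `λ p_i(λ)` to `m+1` from `i < m`, and rate `λ` from
`m` to `m+1`: the probability that absorption occurs after exactly `l` transitions —
namely `p_l(λ)∏_{i<l}(1-p_i(λ))` for `l < m` and `∏_{i=1}^{m-1}(1-p_i(λ))` for `l = m` —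
equals `F(l/λ)-F((l-1)/λ)` for `l ∈ {1,…,m-1}` and `1-F((m-1)/λ)` for `l = m`;
consequently (since after `l` transitions the elapsed time is Erlang of shape `l` and
rate `λ`) the absorption time has CDF equal to the Erlang mixture `F^{(λ)}`. -/
theorem stmt2 (F : ℝ → ℝ) (lam : ℝ) (hlam : 0 < lam) (m : ℕ) (hm : 1 ≤ m)
    (hF0 : F 0 = 0) (hmono : Monotone F) (hF1 : ∀ t, F t < 1)
    (absorbProb : ℕ → ℝ)
    (habs : ∀ l, 1 ≤ l → l ≤ m →
      absorbProb l =
        if l = m then ∏ i ∈ Finset.Icc 1 (m - 1), (1 - jumpProb F lam i)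
        else jumpProb F lam l * ∏ i ∈ Finset.Icc 1 (l - 1), (1 - jumpProb F lam i)) :
    (∀ l, 1 ≤ l → l ≤ m - 1 →
        absorbProb l = F ((l : ℝ) / lam) - F (((l : ℝ) - 1) / lam)) ∧
    (absorbProb m = 1 - F (((m : ℝ) - 1) / lam)) ∧
    (∀ t, ∑ l ∈ Finset.Icc 1 m, absorbProb l * erlangCDF l lam t
        = erlangMixtureCDF F m lam t) := by
  have key : ∀ k : ℕ, ∏ i ∈ Finset.Icc 1 k, (1 - jumpProb F lam i)
      = 1 - F ((k : ℝ) / lam) := by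
    intro k
    induction k with
    | zero => simp [hF0]
    | succ k ih =>
        rw [Finset.prod_Icc_succ_top (Nat.le_add_left 1 k), ih]
        have hne : 1 - F ((k : ℝ) / lam) ≠ 0 := by
          have := hF1 ((k : ℝ) / lam); linarith
        unfold jumpProb
        push_cast
        rw [add_sub_cancel_right]
        field_simp
        ring
  have part1 : ∀ l, 1 ≤ l → l ≤ m - 1 →
      absorbProb l = F ((l : ℝ) / lam) - F (((l : ℝ) - 1) / lam) := by
    intro l hl1 hlm
    have hlm' : l ≤ m := le_trans hlm (Nat.sub_le m 1)
    have hlne : l ≠ m := by omega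
    rw [habs l hl1 hlm', if_neg hlne, key (l - 1)]
    have hc : ((l - 1 : ℕ) : ℝ) = (l : ℝ) - 1 := by
      have := Nat.cast_sub hl1 (R := ℝ); simpa using this
    rw [hc]
    have hne : 1 - F (((l : ℝ) - 1) / lam) ≠ 0 := by
      have := hF1 (((l : ℝ) - 1) / lam); linarith
    unfold jumpProb
    field_simp
  have part2 : absorbProb m = 1 - F (((m : ℝ) - 1) / lam) := by
    rw [habs m hm le_rfl, if_pos rfl, key (m - 1)]
    have hc : ((m - 1 : ℕ) : ℝ) = (m : ℝ) - 1 := by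
      have := Nat.cast_sub hm (R := ℝ); simpa using this
    rw [hc]
  refine ⟨part1, part2, ?_⟩
  intro t
  obtain ⟨n, rfl⟩ := Nat.exists_eq_add_of_le hm
  have hsplit : ∑ l ∈ Finset.Icc 1 (1 + n), absorbProb l * erlangCDF l lam t
      = (∑ l ∈ Finset.Icc 1 n, absorbProb l * erlangCDF l lam t)
        + absorbProb (1 + n) * erlangCDF (1 + n) lam t := by
    rw [add_comm 1 n, Finset.sum_Icc_succ_top (Nat.le_add_left 1 n)]
  rw [hsplit]
  unfold erlangMixtureCDF
  have h1 : ∑ l ∈ Finset.Icc 1 n, absorbProb l * erlangCDF l lam t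
      = ∑ i ∈ Finset.range (1 + n - 1),
          (F (((i : ℝ) + 1) / lam) - F ((i : ℝ) / lam)) * erlangCDF (i + 1) lam t := by
    have hn : 1 + n - 1 = n := by omega
    rw [hn, ← Finset.Ico_add_one_right_eq_Icc, Finset.sum_Ico_eq_sum_range]
    apply Finset.sum_congr rfl (fun i hi => ?_)
    have hi1 : 1 ≤ 1 + i := by omega
    have hi2 : 1 + i ≤ 1 + n - 1 := by
      simp only [Finset.mem_range] at hi; omega
    rw [part1 (1 + i) hi1 hi2]
    push_cast
    ring_nf
  rw [h1, part2]
end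

section
/- Every tridiagonal nonnegative matrix P with P_{ii} P_{i+1,i+1} ≥ P_{i,i+1} P_{i+1,i} for all i is TP2. In particular, an upper bidiagonal nonnegative matrix (P_{ij}=0 unless j∈{i,i+1}) is always TP2. -/
/-- A nonnegative matrix `P` is TP2 if `P_{ik} P_{i'k'} ≥ P_{ik'} P_{i'k}` for `i ≤ i'`,
`k ≤ k'`. -/
def IsTP2 {m n : ℕ} (P : Matrix (Fin m) (Fin n) ℝ) : Prop :=
  (∀ i k, 0 ≤ P i k) ∧
    ∀ i i' : Fin m, ∀ k k' : Fin n, i ≤ i' → k ≤ k' → P i k' * P i' k ≤ P i k * P i' k'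

theorem tri_tp2 {d : ℕ} (P : Matrix (Fin d) (Fin d) ℝ)
    (hpos : ∀ i k, 0 ≤ P i k)
    (htri : ∀ i k : Fin d, ((i : ℕ) + 1 < (k : ℕ) ∨ (k : ℕ) + 1 < (i : ℕ)) → P i k = 0)
    (hdet : ∀ i k : Fin d, (k : ℕ) = (i : ℕ) + 1 → P i k * P k i ≤ P i i * P k k) :
    IsTP2 P := by
  refine ⟨hpos, ?_⟩
  intro i i' k k' hii hkk
  rcases eq_or_lt_of_le hii with rfl | hii'
  · exact (mul_comm _ _).le
  rcases eq_or_lt_of_le hkk with rfl | hkk'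
  · exact le_of_eq rfl
  by_cases h1 : (i : ℕ) + 1 < (k' : ℕ)
  · rw [htri i k' (Or.inl h1), zero_mul]
    exact mul_nonneg (hpos _ _) (hpos _ _)
  by_cases h2 : (k : ℕ) + 1 < (i' : ℕ)
  · rw [htri i' k (Or.inr h2), mul_zero]
    exact mul_nonneg (hpos _ _) (hpos _ _)
  have hii2 : (i : ℕ) < (i' : ℕ) := hii'
  have hkk2 : (k : ℕ) < (k' : ℕ) := hkk'
  have hk : k = i := Fin.ext (by omega)
  have hk' : k' = i' := Fin.ext (by omega)
  rw [hk, hk']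
  exact hdet i i' (by omega)

/-- Every tridiagonal nonnegative matrix `P` with
`P_{ii} P_{i+1,i+1} ≥ P_{i,i+1} P_{i+1,i}` for all `i` is TP2; in particular, an upper
bidiagonal nonnegative matrix (`P_{ij} = 0` unless `j ∈ {i, i+1}`) is always TP2. -/
theorem stmt8 {d : ℕ} :
    (∀ P : Matrix (Fin d) (Fin d) ℝ,
        (∀ i k, 0 ≤ P i k) →
        (∀ i k : Fin d, ((i : ℕ) + 1 < (k : ℕ) ∨ (k : ℕ) + 1 < (i : ℕ)) → P i k = 0) →
        (∀ i k : Fin d, (k : ℕ) = (i : ℕ) + 1 → P i k * P k i ≤ P i i * P k k) →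
        IsTP2 P) ∧
    (∀ P : Matrix (Fin d) (Fin d) ℝ,
        (∀ i k, 0 ≤ P i k) →
        (∀ i k : Fin d, (k : ℕ) ≠ (i : ℕ) → (k : ℕ) ≠ (i : ℕ) + 1 → P i k = 0) →
        IsTP2 P) := by
  refine ⟨tri_tp2, ?_⟩
  intro P hpos h0
  refine tri_tp2 P hpos ?_ ?_
  · intro i k h
    rcases h with h | h
    · exact h0 i k (by omega) (by omega)
    · exact h0 i k (by omega) (by omega)
  · intro i k hk
    rw [h0 k i (by omega) (by omega), mul_zero]
    exact mul_nonneg (hpos _ _) (hpos _ _)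
end

section
/- Let V : S → ℝ be concave on the probability simplex S, and for α ∈ (0,1) and π⁽¹⁾,π⁽²⁾ ∈ S set π = απ⁽¹⁾ + (1−α)π⁽²⁾. Fix a substochastic matrix P and a nonnegative vector b with π'b > 0, (π⁽¹⁾)'b > 0, (π⁽²⁾)'b > 0, and a matrix A with A·1 componentwise dominated appropriately so that the normalized updates lie in S. Define α̃ = α·(π⁽¹⁾)'b / (π'b). Then (π'A)/(π'b) = α̃·(π⁽¹⁾A)/((π⁽¹⁾)'b) + (1−α̃)·(π⁽²⁾A)/((π⁽²⁾)'b), and consequently (π'b)·V((π'A)/(π'b)) ≥ α·(π⁽¹⁾)'b·V((π⁽¹⁾A)/((π⁽¹⁾)'b)) + (1−α)·(π⁽²⁾)'b·V((π⁽²⁾A)/((π⁽²⁾)'b)). -/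
/-- Key algebraic identity behind concavity preservation of the belief
update: with `π = απ⁽¹⁾ + (1-α)π⁽²⁾` and `α̃ = α(π⁽¹⁾)'b/(π'b)`, the normalized update of
`π` is the `α̃`-convex combination of the normalized updates of `π⁽¹⁾` and `π⁽²⁾`;
consequently, for any concave `V` on the simplex,
`(π'b)·V(π'A/(π'b)) ≥ α(π⁽¹⁾)'b·V(π⁽¹⁾A/((π⁽¹⁾)'b)) + (1-α)(π⁽²⁾)'b·V(π⁽²⁾A/((π⁽²⁾)'b))`. -/
theorem stmt11 {d : ℕ}
    (V : (Fin d → ℝ) → ℝ) (hV : ConcaveOn ℝ (stdSimplex ℝ (Fin d)) V)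
    (α : ℝ) (hα : α ∈ Set.Ioo (0 : ℝ) 1)
    (π₁ π₂ : Fin d → ℝ)
    (h₁ : π₁ ∈ stdSimplex ℝ (Fin d)) (h₂ : π₂ ∈ stdSimplex ℝ (Fin d))
    (A : Matrix (Fin d) (Fin d) ℝ) (b : Fin d → ℝ) (hb : ∀ i, 0 ≤ b i)
    (π : Fin d → ℝ) (hπ : π = fun i => α * π₁ i + (1 - α) * π₂ i)
    (hb1 : 0 < ∑ i, π₁ i * b i) (hb2 : 0 < ∑ i, π₂ i * b i) (hbπ : 0 < ∑ i, π i * b i)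
    (hS1 : (fun j => (∑ i, π₁ i * A i j) / ∑ i, π₁ i * b i) ∈ stdSimplex ℝ (Fin d))
    (hS2 : (fun j => (∑ i, π₂ i * A i j) / ∑ i, π₂ i * b i) ∈ stdSimplex ℝ (Fin d))
    (αt : ℝ) (hαt : αt = α * (∑ i, π₁ i * b i) / ∑ i, π i * b i) :
    ((fun j => (∑ i, π i * A i j) / ∑ i, π i * b i)
        = fun j => αt * ((∑ i, π₁ i * A i j) / ∑ i, π₁ i * b i)
            + (1 - αt) * ((∑ i, π₂ i * A i j) / ∑ i, π₂ i * b i)) ∧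
    α * (∑ i, π₁ i * b i) * V (fun j => (∑ i, π₁ i * A i j) / ∑ i, π₁ i * b i)
        + (1 - α) * (∑ i, π₂ i * b i) * V (fun j => (∑ i, π₂ i * A i j) / ∑ i, π₂ i * b i)
      ≤ (∑ i, π i * b i) * V (fun j => (∑ i, π i * A i j) / ∑ i, π i * b i) := by

  obtain ⟨hα0, hα1⟩ := hα
  have hBπ : (∑ i, π i * b i) = α * (∑ i, π₁ i * b i) + (1 - α) * (∑ i, π₂ i * b i) := by
    subst hπ; simp only [add_mul, mul_assoc]; rw [Finset.sum_add_distrib, Finset.mul_sum,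
      Finset.mul_sum]
  have hA : ∀ j, (∑ i, π i * A i j) = α * (∑ i, π₁ i * A i j) + (1 - α) * (∑ i, π₂ i * A i j) := by
    intro j
    subst hπ; simp only [add_mul, mul_assoc]; rw [Finset.sum_add_distrib, Finset.mul_sum,
      Finset.mul_sum]
  have h1mαt : 1 - αt = (1 - α) * (∑ i, π₂ i * b i) / ∑ i, π i * b i := by
    rw [hαt]; field_simp; linarith [hBπ]
  have heq : (fun j => (∑ i, π i * A i j) / ∑ i, π i * b i)
        = fun j => αt * ((∑ i, π₁ i * A i j) / ∑ i, π₁ i * b i)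
            + (1 - αt) * ((∑ i, π₂ i * A i j) / ∑ i, π₂ i * b i) := by
    funext j
    rw [hA j, h1mαt, hαt]
    field_simp
  refine ⟨heq, ?_⟩
  have hαt0 : 0 ≤ αt := by
    rw [hαt]; positivity
  have h1mαt0 : 0 ≤ 1 - αt := by
    have h1α : 0 < 1 - α := by linarith
    rw [h1mαt]; positivity
  have hsum : αt + (1 - αt) = 1 := by ring
  have key := hV.2 hS1 hS2 hαt0 h1mαt0 hsum
  have hsmul : αt • (fun j => (∑ i, π₁ i * A i j) / ∑ i, π₁ i * b i)
      + (1 - αt) • (fun j => (∑ i, π₂ i * A i j) / ∑ i, π₂ i * b i)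
      = (fun j => (∑ i, π i * A i j) / ∑ i, π i * b i) := by
    rw [heq]; funext j; simp [Pi.add_apply]
  rw [hsmul] at key
  have hmul := mul_le_mul_of_nonneg_left key hbπ.le
  calc α * (∑ i, π₁ i * b i) * V (fun j => (∑ i, π₁ i * A i j) / ∑ i, π₁ i * b i)
        + (1 - α) * (∑ i, π₂ i * b i) * V (fun j => (∑ i, π₂ i * A i j) / ∑ i, π₂ i * b i)
      = (∑ i, π i * b i) * (αt * V (fun j => (∑ i, π₁ i * A i j) / ∑ i, π₁ i * b i)
        + (1 - αt) * V (fun j => (∑ i, π₂ i * A i j) / ∑ i, π₂ i * b i)) := by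
        rw [h1mαt, hαt]; field_simp
    _ ≤ _ := hmul
end

section
/- Consider a pure-birth CTMC on {1,…,m+1} with state m+1 absorbing, started at state 1, with exit rate λ from each transient state, moving from state i to i+1 with rate λ(1−p_i) and to state m+1 with rate λp_i (with p_m := 1). Then the transition probabilities satisfy p_{1,j}(t) = [∏_{k=1}^{j-1}(1−p_k)] · (λt)^{j−1} e^{−λt}/(j−1)! for j ∈ {1,…,m}. Consequently, the ratio p_{1,j+1}(t)/p_{1,j}(t) = (1−p_j)λt/j is increasing in t, and hence the conditional distribution vector p̃(t) = (p_{1,j}(t)/(1−p_{1,m+1}(t)))_{j=1}^m is nondecreasing in t with respect to the monotone likelihood ratio order. -/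
/-- For the pure-birth CTMC on `{1,…,m+1}` (state `m+1` absorbing,
started at state `1`, exit rate `λ` from each transient state, jumping from `i` to `i+1`
at rate `λ(1-pᵢ)` and to `m+1` at rate `λpᵢ`, with `p_m = 1`), whose transition
probabilities `p_{1,j}(t)` solve the Kolmogorov forward equations, we have
`p_{1,j}(t) = [∏_{k<j}(1-p_k)]·(λt)^{j-1}e^{-λt}/(j-1)!` for `j ∈ {1,…,m}`; the ratio
`p_{1,j+1}(t)/p_{1,j}(t) = (1-p_j)λt/j` is increasing in `t`; and hence the conditional
vector `p̃(t) = (p_{1,j}(t)/(1-p_{1,m+1}(t)))_{j=1}^m` — with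
`1-p_{1,m+1}(t) = ∑_{j=1}^m p_{1,j}(t)` — is nondecreasing in `t` in the MLR order. -/
theorem stmt12 (m : ℕ) (hm : 1 ≤ m) (lam : ℝ) (hlam : 0 < lam)
    (p : ℕ → ℝ) (hp : ∀ j, 1 ≤ j → j < m → p j ∈ Set.Ico (0 : ℝ) 1) (hpm : p m = 1)
    (p1 : ℕ → ℝ → ℝ)
    (hinit1 : p1 1 0 = 1) (hinit : ∀ j, 2 ≤ j → j ≤ m → p1 j 0 = 0)
    (hode1 : ∀ t, HasDerivAt (p1 1) (-lam * p1 1 t) t)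
    (hode : ∀ j, 2 ≤ j → j ≤ m → ∀ t,
      HasDerivAt (p1 j) (lam * (1 - p (j - 1)) * p1 (j - 1) t - lam * p1 j t) t) :
    (∀ j, 1 ≤ j → j ≤ m → ∀ t, 0 ≤ t →
        p1 j t = (∏ k ∈ Finset.Icc 1 (j - 1), (1 - p k)) *
          ((lam * t) ^ (j - 1) * Real.exp (-(lam * t)) / (Nat.factorial (j - 1)))) ∧
    (∀ j, 1 ≤ j → j < m →
        (∀ t, 0 < t → p1 (j + 1) t / p1 j t = (1 - p j) * lam * t / j) ∧
        MonotoneOn (fun t => p1 (j + 1) t / p1 j t) (Set.Ioi (0 : ℝ))) ∧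
    (∀ t₁ t₂, 0 < t₂ → t₂ ≤ t₁ → ∀ i j, 1 ≤ j → j < i → i ≤ m →
        (p1 j t₁ / ∑ j' ∈ Finset.Icc 1 m, p1 j' t₁) *
            (p1 i t₂ / ∑ j' ∈ Finset.Icc 1 m, p1 j' t₂)
          ≤ (p1 i t₁ / ∑ j' ∈ Finset.Icc 1 m, p1 j' t₁) *
            (p1 j t₂ / ∑ j' ∈ Finset.Icc 1 m, p1 j' t₂)) := by
  -- a function with everywhere-zero derivative is constant
  have const_of : ∀ f : ℝ → ℝ, (∀ s, HasDerivAt f 0 s) → ∀ x, f x = f 0 := by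
    intro f hf x
    exact is_const_of_deriv_eq_zero (fun s => (hf s).differentiableAt)
      (fun s => (hf s).deriv) x 0
  -- the explicit formula, valid for all real t
  have key : ∀ j, 1 ≤ j → j ≤ m → ∀ t : ℝ,
      p1 j t = (∏ k ∈ Finset.Icc 1 (j - 1), (1 - p k)) *
        ((lam * t) ^ (j - 1) * Real.exp (-(lam * t)) / (Nat.factorial (j - 1))) := by
    intro j hj
    induction j, hj using Nat.le_induction with
    | base =>
      intro _ t
      have hq : ∀ s, HasDerivAt (fun s => p1 1 s * Real.exp (lam * s)) 0 s := by
        intro s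
        have h1 := (hode1 s).mul (((hasDerivAt_id s).const_mul lam).exp)
        exact h1.congr_deriv (by simp only [id]; ring)
      have hc := const_of _ hq t
      simp only [hinit1, mul_zero, Real.exp_zero, one_mul] at hc
      rw [show (Finset.Icc 1 0 : Finset ℕ) = ∅ from rfl, Finset.prod_empty]
      norm_num
      rw [Real.exp_neg]
      have he : Real.exp (lam * t) ≠ 0 := Real.exp_ne_zero _
      field_simp
      linarith [hc]
    | succ n hn ih =>
      intro hle t
      obtain ⟨k, rfl⟩ : ∃ k, n = k + 1 := ⟨n - 1, (Nat.succ_pred_eq_of_pos hn).symm⟩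
      have hnm : k + 1 ≤ m := le_of_lt (Nat.lt_of_succ_le hle)
      have ih' := ih hnm
      simp only [Nat.add_sub_cancel] at ih' ⊢
      have hsplit : (∏ k' ∈ Finset.Icc 1 (k + 1), (1 - p k'))
          = (∏ k' ∈ Finset.Icc 1 k, (1 - p k')) * (1 - p (k + 1)) :=
        Finset.prod_Icc_succ_top (by omega) _
      set Ck : ℝ := ∏ k' ∈ Finset.Icc 1 k, (1 - p k') with hCk
      set C : ℝ := ∏ k' ∈ Finset.Icc 1 (k + 1), (1 - p k') with hC
      have hodek := hode (k + 2) (by omega) hle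
      simp only [show k + 2 - 1 = k + 1 from rfl] at hodek
      have hq : ∀ s, HasDerivAt
          (fun s => p1 (k + 2) s * Real.exp (lam * s)
            - C * (lam * s) ^ (k + 1) / ((k + 1).factorial : ℝ)) 0 s := by
        intro s
        have h1 := (hodek s).mul (((hasDerivAt_id s).const_mul lam).exp)
        have h2 : HasDerivAt (fun s => C * (lam * s) ^ (k + 1) / ((k + 1).factorial : ℝ))
            ((C * ((k + 1 : ℕ) * (lam * s) ^ k * (lam * 1))) / ((k + 1).factorial : ℝ)) s :=
          ((((hasDerivAt_id s).const_mul lam).pow (k + 1)).const_mul C).div_const _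
        have h3 := h1.sub h2
        refine h3.congr_deriv ?_
        simp only [show k + 2 - 1 = k + 1 from rfl, id]
        rw [ih' s, hsplit, Real.exp_neg]
        have hfac : (((k + 1).factorial : ℝ)) = (k + 1) * (k.factorial : ℝ) := by
          push_cast [Nat.factorial_succ]; ring
        rw [hfac]
        have he : Real.exp (lam * s) ≠ 0 := Real.exp_ne_zero _
        have hf : (k.factorial : ℝ) ≠ 0 := Nat.cast_ne_zero.2 k.factorial_ne_zero
        have hk1 : ((k : ℝ) + 1) ≠ 0 := by positivity
        field_simp
        push_cast
        ring
      have hc := const_of _ hq t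
      have h0 : p1 (k + 2) 0 * Real.exp (lam * 0)
          - C * (lam * 0) ^ (k + 1) / ((k + 1).factorial : ℝ) = 0 := by
        rw [hinit (k + 2) (by omega) hle]
        simp
      rw [h0] at hc
      have he : Real.exp (lam * t) ≠ 0 := Real.exp_ne_zero _
      have hf : (((k + 1).factorial : ℝ)) ≠ 0 := Nat.cast_ne_zero.2 (k + 1).factorial_ne_zero
      rw [Real.exp_neg]
      field_simp at hc ⊢
      linarith [hc]
  -- positivity of the products of (1 - p k)
  have hCpos : ∀ j, j ≤ m → 0 < ∏ k ∈ Finset.Icc 1 (j - 1), (1 - p k) := by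
    intro j hjm
    apply Finset.prod_pos
    intro k hk
    rw [Finset.mem_Icc] at hk
    have := hp k hk.1 (by omega)
    have := this.2
    linarith
  -- positivity of p1 j t for t > 0
  have hpos : ∀ j, 1 ≤ j → j ≤ m → ∀ t : ℝ, 0 < t → 0 < p1 j t := by
    intro j hj hjm t ht
    rw [key j hj hjm t]
    have hC := hCpos j hjm
    have h1 : 0 < lam * t := by positivity
    positivity
  refine ⟨fun j hj hjm t _ => key j hj hjm t, ?_, ?_⟩
  · -- part 2 : ratio formula and monotonicity
    intro j hj hjm
    obtain ⟨k, rfl⟩ : ∃ k, j = k + 1 := ⟨j - 1, (Nat.succ_pred_eq_of_pos hj).symm⟩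
    have hsplit : (∏ k' ∈ Finset.Icc 1 (k + 1), (1 - p k'))
        = (∏ k' ∈ Finset.Icc 1 k, (1 - p k')) * (1 - p (k + 1)) :=
      Finset.prod_Icc_succ_top (by omega) _
    have hratio : ∀ t : ℝ, 0 < t →
        p1 (k + 1 + 1) t / p1 (k + 1) t = (1 - p (k + 1)) * lam * t / ((k : ℝ) + 1) := by
      intro t ht
      rw [key (k + 2) (by omega) (by omega) t, key (k + 1) (by omega) (by omega) t]
      simp only [show k + 2 - 1 = k + 1 from rfl, Nat.add_sub_cancel]
      rw [hsplit]
      have hC := hCpos (k + 1) (by omega)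
      simp only [Nat.add_sub_cancel] at hC
      have hCne : (∏ k' ∈ Finset.Icc 1 k, (1 - p k')) ≠ 0 := ne_of_gt hC
      have hlt : lam * t ≠ 0 := by positivity
      have he : Real.exp (-(lam * t)) ≠ 0 := Real.exp_ne_zero _
      have hf : (k.factorial : ℝ) ≠ 0 := Nat.cast_ne_zero.2 k.factorial_ne_zero
      have hfac : (((k + 1).factorial : ℝ)) = ((k : ℝ) + 1) * (k.factorial : ℝ) := by
        push_cast [Nat.factorial_succ]; ring
      have hk1 : ((k : ℝ) + 1) ≠ 0 := by positivity
      rw [hfac, pow_succ]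
      push_cast
      field_simp
    refine ⟨by exact_mod_cast hratio, ?_⟩
    intro t₁ ht₁ t₂ ht₂ h12
    simp only [Set.mem_Ioi] at ht₁ ht₂
    have h1 := hratio t₁ ht₁
    have h2 := hratio t₂ ht₂
    simp only [h1, h2]
    have hpj : 0 ≤ 1 - p (k + 1) := by
      have := (hp (k + 1) (by omega) hjm).2
      linarith
    have hk1 : (0:ℝ) < (k : ℝ) + 1 := by positivity
    exact (div_le_div_iff_of_pos_right hk1).2 (by nlinarith [mul_nonneg (mul_nonneg hpj hlam.le) (sub_nonneg.2 h12)])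
  · -- part 3 : MLR inequality
    intro t₁ t₂ ht₂ hle i j hj hji him
    have ht₁ : 0 < t₁ := lt_of_lt_of_le ht₂ hle
    have hjm : j ≤ m := by omega
    have hi1 : 1 ≤ i := by omega
    have hSpos : ∀ t : ℝ, 0 < t → 0 < ∑ j' ∈ Finset.Icc 1 m, p1 j' t := by
      intro t ht
      apply Finset.sum_pos
      · intro j' hj'
        rw [Finset.mem_Icc] at hj'
        exact hpos j' hj'.1 hj'.2 t ht
      · exact ⟨1, Finset.mem_Icc.2 ⟨le_refl 1, hm⟩⟩
    have hS₁ := hSpos t₁ ht₁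
    have hS₂ := hSpos t₂ ht₂
    -- core product inequality
    have hmain : p1 j t₁ * p1 i t₂ ≤ p1 i t₁ * p1 j t₂ := by
      rw [key j hj hjm t₁, key i hi1 him t₂, key i hi1 him t₁, key j hj hjm t₂]
      have hCj := hCpos j hjm
      have hCi := hCpos i him
      set Cj : ℝ := ∏ k ∈ Finset.Icc 1 (j - 1), (1 - p k)
      set Ci : ℝ := ∏ k ∈ Finset.Icc 1 (i - 1), (1 - p k)
      have hab : lam * t₂ ≤ lam * t₁ := by nlinarith
      have ha : (0:ℝ) ≤ lam * t₂ := by positivity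
      have hcore : (lam * t₁) ^ (j - 1) * (lam * t₂) ^ (i - 1)
          ≤ (lam * t₁) ^ (i - 1) * (lam * t₂) ^ (j - 1) := by
        have hexp : i - 1 = (j - 1) + (i - j) := by omega
        rw [hexp, pow_add, pow_add]
        have h1 : (lam * t₂) ^ (i - j) ≤ (lam * t₁) ^ (i - j) :=
          pow_le_pow_left₀ ha hab _
        have h2 : (0:ℝ) ≤ (lam * t₁) ^ (j - 1) * (lam * t₂) ^ (j - 1) := by positivity
        calc (lam * t₁) ^ (j - 1) * ((lam * t₂) ^ (j - 1) * (lam * t₂) ^ (i - j))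
            = ((lam * t₁) ^ (j - 1) * (lam * t₂) ^ (j - 1)) * (lam * t₂) ^ (i - j) := by ring
          _ ≤ ((lam * t₁) ^ (j - 1) * (lam * t₂) ^ (j - 1)) * (lam * t₁) ^ (i - j) :=
              mul_le_mul_of_nonneg_left h1 h2
          _ = (lam * t₁) ^ (j - 1) * (lam * t₁) ^ (i - j) * (lam * t₂) ^ (j - 1) := by ring
      have hK : (0:ℝ) ≤ Cj * Ci * Real.exp (-(lam * t₁)) * Real.exp (-(lam * t₂))
          / (((j - 1).factorial : ℝ) * ((i - 1).factorial : ℝ)) := by positivity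
      calc Cj * ((lam * t₁) ^ (j - 1) * Real.exp (-(lam * t₁)) / ((j - 1).factorial : ℝ)) *
            (Ci * ((lam * t₂) ^ (i - 1) * Real.exp (-(lam * t₂)) / ((i - 1).factorial : ℝ)))
          = (Cj * Ci * Real.exp (-(lam * t₁)) * Real.exp (-(lam * t₂))
              / (((j - 1).factorial : ℝ) * ((i - 1).factorial : ℝ)))
            * ((lam * t₁) ^ (j - 1) * (lam * t₂) ^ (i - 1)) := by ring
        _ ≤ (Cj * Ci * Real.exp (-(lam * t₁)) * Real.exp (-(lam * t₂))
              / (((j - 1).factorial : ℝ) * ((i - 1).factorial : ℝ)))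
            * ((lam * t₁) ^ (i - 1) * (lam * t₂) ^ (j - 1)) :=
            mul_le_mul_of_nonneg_left hcore hK
        _ = Ci * ((lam * t₁) ^ (i - 1) * Real.exp (-(lam * t₁)) / ((i - 1).factorial : ℝ)) *
            (Cj * ((lam * t₂) ^ (j - 1) * Real.exp (-(lam * t₂)) / ((j - 1).factorial : ℝ))) := by
            ring
    rw [div_mul_div_comm, div_mul_div_comm]
    exact (div_le_div_iff_of_pos_right (by positivity)).2 hmain
end

section
/- In the surrogate POMDP for mission abort, if the cost ratio satisfies C_m / C_s ≥ exp(λ(H + w_N)) − 1, then V_ab(n,π) ≥ V̄_c(n,π) for all n and all beliefs π ∈ S, where V_ab(n,π) = C_m + C_s·κ(w_n,π) and V̄_c(n,π) = (C_s + C_m)·κ((N−n)δ + w_N, π); hence aborting is never strictly better than continuing. In particular it suffices to verify the single inequality C_m ≥ (C_s + C_m)(1 − exp(−λ(H + w_N))). -/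
/-- In the surrogate POMDP for mission abort, with
`V_ab(n,π) = C_m + C_s·κ(w_n,π)` and `V̄_c(n,π) = (C_s+C_m)·κ((N-n)δ + w_N, π)`, where
`κ(t,π) ≤ 1 - e^{-λt}` is the absorption probability within time `t`, `w` is nondecreasing
with `w₀ = 0`, and `H = Nδ`: if `C_m/C_s ≥ e^{λ(H+w_N)} - 1` then
`V_ab(n,π) ≥ V̄_c(n,π)` for all `n ≤ N` and all beliefs `π`, so aborting is never strictly
better than continuing; and it suffices to verify the single inequality
`C_m ≥ (C_s+C_m)(1 - e^{-λ(H+w_N)})`. -/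
theorem stmt14 {d : ℕ} (N : ℕ) (lam δ Cs Cm H : ℝ)
    (hlam : 0 < lam) (hδ : 0 < δ) (hCs : 0 < Cs) (hCm : 0 ≤ Cm)
    (w : ℕ → ℝ) (hwmono : Monotone w) (hw0 : w 0 = 0)
    (hH : H = (N : ℝ) * δ)
    (κ : ℝ → (Fin d → ℝ) → ℝ)
    (hκnn : ∀ t π, 0 ≤ κ t π)
    (hκub : ∀ t, 0 ≤ t → ∀ π ∈ stdSimplex ℝ (Fin d), κ t π ≤ 1 - Real.exp (-(lam * t))) :
    (Real.exp (lam * (H + w N)) - 1 ≤ Cm / Cs →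
      ∀ n ≤ N, ∀ π ∈ stdSimplex ℝ (Fin d),
        (Cs + Cm) * κ (((N : ℝ) - (n : ℝ)) * δ + w N) π ≤ Cm + Cs * κ (w n) π) ∧
    ((Cs + Cm) * (1 - Real.exp (-(lam * (H + w N)))) ≤ Cm →
      Real.exp (lam * (H + w N)) - 1 ≤ Cm / Cs) := by

  have hwN : 0 ≤ w N := hw0 ▸ hwmono (Nat.zero_le N)
  have key : ∀ a : ℝ, (Real.exp a - 1 ≤ Cm / Cs ↔ (Cs + Cm) * (1 - Real.exp (-a)) ≤ Cm) := by
    intro a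
    have hea : 0 < Real.exp a := Real.exp_pos a
    rw [le_div_iff₀ hCs]
    constructor
    · intro h
      have h' : Cs * (Real.exp a - 1) ≤ Cm := by linarith [mul_comm Cs (Real.exp a - 1)]
      have := mul_le_mul_of_nonneg_right h' (le_of_lt (Real.exp_pos (-a)))
      have hinv : Real.exp a * Real.exp (-a) = 1 := by
        rw [← Real.exp_add]; simp
      nlinarith [Real.exp_pos (-a)]
    · intro h
      have hinv : Real.exp a * Real.exp (-a) = 1 := by
        rw [← Real.exp_add]; simp
      have := mul_le_mul_of_nonneg_right h (le_of_lt hea)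
      nlinarith [Real.exp_pos (-a)]
  constructor
  · intro hcost n hn π hπ
    set t := ((N : ℝ) - (n : ℝ)) * δ + w N with ht
    have ht0 : 0 ≤ t := by
      have : (n : ℝ) ≤ (N : ℝ) := Nat.cast_le.mpr hn
      have h1 : 0 ≤ ((N : ℝ) - (n : ℝ)) * δ := mul_nonneg (by linarith) hδ.le
      linarith
    have htle : t ≤ H + w N := by
      have : (0 : ℝ) ≤ (n : ℝ) := Nat.cast_nonneg n
      have : ((N : ℝ) - (n : ℝ)) * δ ≤ (N : ℝ) * δ := by nlinarith
      rw [hH]; linarith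
    have h1 : κ t π ≤ 1 - Real.exp (-(lam * t)) := hκub t ht0 π hπ
    have h2 : Real.exp (-(lam * (H + w N))) ≤ Real.exp (-(lam * t)) := by
      apply Real.exp_le_exp.mpr
      have := mul_le_mul_of_nonneg_left htle hlam.le
      linarith
    have h3 : κ t π ≤ 1 - Real.exp (-(lam * (H + w N))) := by linarith
    have h4 : (Cs + Cm) * κ t π ≤ (Cs + Cm) * (1 - Real.exp (-(lam * (H + w N)))) :=
      mul_le_mul_of_nonneg_left h3 (by linarith)
    have h5 : (Cs + Cm) * (1 - Real.exp (-(lam * (H + w N)))) ≤ Cm :=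
      (key (lam * (H + w N))).mp hcost
    have h6 : 0 ≤ Cs * κ (w n) π := mul_nonneg hCs.le (hκnn _ _)
    linarith
  · intro h
    exact (key (lam * (H + w N))).mpr h
end

section
/- Suppose V_ab(n,·) and V_c(n,·) are functions on the probability simplex S with V_ab(n,·) linear (affine) and the overall value function V(n,·) = min{V_ab(n,·), V_c(n,·)} concave. Then the abort region A_n = {π ∈ S : V_ab(n,π) ≤ V_c(n,π)} is convex. -/
/-- If `V_ab` is affine on the probability simplex `S` and the value
function `V = min{V_ab, V_c}` is concave on `S`, then the abort region
`{π ∈ S : V_ab(π) ≤ V_c(π)}` is convex. -/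
theorem stmt15 {d : ℕ} (Vab Vc : (Fin d → ℝ) → ℝ)
    (haff : ∀ π₁ ∈ stdSimplex ℝ (Fin d), ∀ π₂ ∈ stdSimplex ℝ (Fin d),
      ∀ a ∈ Set.Icc (0 : ℝ) 1,
        Vab (fun i => a * π₁ i + (1 - a) * π₂ i) = a * Vab π₁ + (1 - a) * Vab π₂)
    (hconc : ConcaveOn ℝ (stdSimplex ℝ (Fin d)) fun π => min (Vab π) (Vc π)) :
    Convex ℝ {π : Fin d → ℝ | π ∈ stdSimplex ℝ (Fin d) ∧ Vab π ≤ Vc π} := by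
  intro x hx y hy a b ha hb hab
  have hxS := hx.1
  have hyS := hy.1
  have hzS : a • x + b • y ∈ stdSimplex ℝ (Fin d) :=
    (convex_stdSimplex ℝ (Fin d)) hxS hyS ha hb hab
  refine ⟨hzS, ?_⟩
  have hb' : b = 1 - a := by linarith
  have haI : a ∈ Set.Icc (0 : ℝ) 1 := ⟨ha, by linarith⟩
  have heq : (a • x + b • y) = fun i => a * x i + (1 - a) * y i := by
    funext i; simp [hb']
  have haffz : Vab (a • x + b • y) = a * Vab x + (1 - a) * Vab y := by
    rw [heq]; exact haff x hxS y hyS a haI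
  have hmin := hconc.2 hxS hyS ha hb hab
  have h1 : min (Vab x) (Vc x) = Vab x := min_eq_left hx.2
  have h2 : min (Vab y) (Vc y) = Vab y := min_eq_left hy.2
  simp only [smul_eq_mul, h1, h2] at hmin
  have : Vab (a • x + b • y) ≤ min (Vab (a • x + b • y)) (Vc (a • x + b • y)) := by
    rw [haffz, hb'] at *
    linarith [hmin]
  exact this.trans (min_le_right _ _)
end

section
/- Let π⁽¹⁾ and π⁽²⁾ be two points of the probability simplex S ⊂ ℝ^d (neither equal to e_d) with spherical coordinates (r₁, Φ) and (r₂, Φ) with respect to the vertex e_d, sharing the same angle vector Φ, given by π_j = r·cos φ_{j−1}·∏_{k=1}^{j−2} sin φ_k for j=2,…,d−1, π_d = 1 + r·cos φ_{d−1}·∏_{k=1}^{d−2} sin φ_k, and π₁ = −r(cos φ₁ + Σ_{j=2}^{d−1} cos φ_j ∏_{k=1}^{j−1} sin φ_k). If r₁ < r₂ then π⁽¹⁾ ⪰_LR π⁽²⁾ in the monotone likelihood ratio order. -/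
/-- The point of the probability simplex in `ℝ^d` (coordinates indexed by `1,…,d`) with
spherical coordinates `(r, Φ)` with respect to the vertex `e_d`:
`π_j = r cos φ_{j-1} ∏_{k=1}^{j-2} sin φ_k` for `j = 2,…,d-1`,
`π_d = 1 + r cos φ_{d-1} ∏_{k=1}^{d-2} sin φ_k`, and
`π_1 = -r(cos φ₁ + ∑_{j=2}^{d-1} cos φ_j ∏_{k=1}^{j-1} sin φ_k)`. -/
noncomputable def sphToCart (d : ℕ) (r : ℝ) (φ : ℕ → ℝ) : ℕ → ℝ := fun j =>
  if j = 1 then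
    -r * (Real.cos (φ 1) +
      ∑ l ∈ Finset.Icc 2 (d - 1),
        Real.cos (φ l) * ∏ k ∈ Finset.Icc 1 (l - 1), Real.sin (φ k))
  else if j = d then
    1 + r * Real.cos (φ (d - 1)) * ∏ k ∈ Finset.Icc 1 (d - 2), Real.sin (φ k)
  else
    r * Real.cos (φ (j - 1)) * ∏ k ∈ Finset.Icc 1 (j - 2), Real.sin (φ k)


noncomputable def gAux (d : ℕ) (φ : ℕ → ℝ) (j : ℕ) : ℝ :=
  if j = 1 then
    -(Real.cos (φ 1) +
      ∑ l ∈ Finset.Icc 2 (d - 1),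
        Real.cos (φ l) * ∏ k ∈ Finset.Icc 1 (l - 1), Real.sin (φ k))
  else Real.cos (φ (j - 1)) * ∏ k ∈ Finset.Icc 1 (j - 2), Real.sin (φ k)

lemma sph_ne (d : ℕ) (r : ℝ) (φ : ℕ → ℝ) (j : ℕ) (h : j ≠ d) :
    sphToCart d r φ j = r * gAux d φ j := by
  unfold sphToCart gAux
  split_ifs with h1 <;> first | ring | exact absurd ‹j = d› h

lemma sph_d (d : ℕ) (hd : 2 ≤ d) (r : ℝ) (φ : ℕ → ℝ) :
    sphToCart d r φ d =
      1 + r * (Real.cos (φ (d - 1)) * ∏ k ∈ Finset.Icc 1 (d - 2), Real.sin (φ k)) := by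
  unfold sphToCart
  rw [if_neg (by omega), if_pos rfl]
  ring

/-- If `π⁽¹⁾` and `π⁽²⁾` are points of the probability simplex (neither
equal to `e_d`) with spherical coordinates `(r₁, Φ)` and `(r₂, Φ)` sharing the same angle
vector `Φ`, and `r₁ < r₂`, then `π⁽¹⁾ ⪰_LR π⁽²⁾` in the monotone likelihood ratio order:
`π⁽¹⁾ᵢ π⁽²⁾ⱼ ≥ π⁽¹⁾ⱼ π⁽²⁾ᵢ` for all `i > j`. -/
theorem stmt17 (d : ℕ) (hd : 2 ≤ d) (φ : ℕ → ℝ) (r₁ r₂ : ℝ)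
    (hr₁ : 0 < r₁) (hr : r₁ < r₂)
    (h1nn : ∀ j ∈ Finset.Icc 1 d, 0 ≤ sphToCart d r₁ φ j)
    (h2nn : ∀ j ∈ Finset.Icc 1 d, 0 ≤ sphToCart d r₂ φ j)
    (h1sum : ∑ j ∈ Finset.Icc 1 d, sphToCart d r₁ φ j = 1)
    (h2sum : ∑ j ∈ Finset.Icc 1 d, sphToCart d r₂ φ j = 1) :
    ∀ i j, 1 ≤ j → j < i → i ≤ d →
      sphToCart d r₁ φ j * sphToCart d r₂ φ i ≤ sphToCart d r₁ φ i * sphToCart d r₂ φ j := by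
  intro i j hj hji hid
  have hjd : j ≠ d := by omega
  by_cases hidd : i = d
  · have hgj : 0 ≤ gAux d φ j := by
      have := h1nn j (Finset.mem_Icc.mpr ⟨hj, by omega⟩)
      rw [sph_ne d r₁ φ j hjd] at this
      exact nonneg_of_mul_nonneg_right this hr₁
    rw [hidd, sph_ne d r₁ φ j hjd, sph_ne d r₂ φ j hjd, sph_d d hd r₁ φ, sph_d d hd r₂ φ]
    nlinarith [mul_nonneg hgj (le_of_lt (sub_pos.mpr hr))]
  · have hid' : i ≠ d := hidd
    rw [sph_ne d r₁ φ j hjd, sph_ne d r₂ φ j hjd, sph_ne d r₁ φ i hid',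
      sph_ne d r₂ φ i hid']
    ring_nf
    exact le_refl _
end

section
/- In the surrogate CTMC for mission abort with transient states 1,…,m₁+m₂ and absorbing state m₁+m₂+1, with rates q_{i,i+1} = λ−ζ and q_{i,m₁+m₂+1} = ζ for i ≤ m₁, q_{i,i+1} = λ(1−p_{i−m₁}(λ)) and q_{i,m₁+m₂+1} = λ p_{i−m₁}(λ) for m₁ < i < m₁+m₂, and q_{m₁+m₂, m₁+m₂+1} = λ: if the sequence (p_i(λ))_i is nondecreasing and λp₁(λ) ≥ ζ, then the absorption probability p_{i,m₁+m₂+1}(t) is nondecreasing in i ∈ {1,…,m₁+m₂+1} for every t > 0. -/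
lemma aux_exp_int (lam : ℝ) (hl : 0 < lam) (t : ℝ) :
    ∫ u in (0:ℝ)..t, Real.exp (lam * (u - t)) = (1 - Real.exp (-(lam * t))) / lam := by
  have h : ∀ u ∈ Set.uIcc (0:ℝ) t, HasDerivAt (fun u => Real.exp (lam * (u - t)) / lam)
      (Real.exp (lam * (u - t))) u := by
    intro u _
    have h1 : HasDerivAt (fun u : ℝ => lam * (u - t)) lam u := by
      simpa using ((hasDerivAt_id u).sub_const t).const_mul lam
    have h2 := (h1.exp).div_const lam
    rw [mul_div_assoc, div_self hl.ne', mul_one] at h2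
    exact h2
  rw [intervalIntegral.integral_eq_sub_of_hasDerivAt h
    (Continuous.intervalIntegrable (by continuity) 0 t)]
  have e1 : lam * (t - t) = 0 := by ring
  have e2 : lam * (0 - t) = -(lam * t) := by ring
  rw [e1, e2, Real.exp_zero]
  ring

lemma aux_form (lam : ℝ) (g : ℝ → ℝ) (t : ℝ) :
    (∫ u in (0:ℝ)..t, Real.exp (lam * (u - t)) * g u)
      = Real.exp (-(lam * t)) * ∫ u in (0:ℝ)..t, Real.exp (lam * u) * g u := by
  have h : ∀ u : ℝ, Real.exp (lam * (u - t)) * g u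
      = Real.exp (-(lam * t)) * (Real.exp (lam * u) * g u) := by
    intro u
    rw [← mul_assoc, ← Real.exp_add]
    congr 2
    ring
  simp only [h]
  exact intervalIntegral.integral_const_mul _ _

lemma aux_cont (lam : ℝ) (g : ℝ → ℝ) (hg : Continuous g) :
    Continuous (fun t => Real.exp (-(lam * t)) * ∫ u in (0:ℝ)..t, Real.exp (lam * u) * g u) := by
  apply Continuous.mul (by continuity)
  exact intervalIntegral.continuous_primitive
    (fun a b => Continuous.intervalIntegrable
      ((Real.continuous_exp.comp (continuous_const.mul continuous_id)).mul hg) a b) 0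

lemma aux_mono (lam : ℝ) (g h : ℝ → ℝ) (hg : Continuous g) (hh : Continuous h)
    (t : ℝ) (ht : 0 ≤ t) (hle : ∀ u, 0 ≤ u → u ≤ t → g u ≤ h u) :
    (∫ u in (0:ℝ)..t, Real.exp (lam * (u - t)) * g u)
      ≤ ∫ u in (0:ℝ)..t, Real.exp (lam * (u - t)) * h u := by
  have hce : Continuous (fun u : ℝ => Real.exp (lam * (u - t))) :=
    Real.continuous_exp.comp (continuous_const.mul (continuous_id.sub continuous_const))
  apply intervalIntegral.integral_mono_on ht
    ((hce.mul hg).intervalIntegrable 0 t) ((hce.mul hh).intervalIntegrable 0 t)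
  intro x hx
  exact mul_le_mul_of_nonneg_left (hle x hx.1 hx.2) (Real.exp_pos _).le


/-- In the surrogate CTMC for mission abort with transient states
`1,…,m₁+m₂` and absorbing state `m₁+m₂+1` (rates `q_{i,i+1} = λ-ζ`, `q_{i,A} = ζ` for
`i ≤ m₁`; `q_{i,i+1} = λ(1-p_{i-m₁})`, `q_{i,A} = λp_{i-m₁}` for `m₁ < i < m₁+m₂`;
`q_{m₁+m₂,A} = λ`), whose absorption probabilities `P i t = p_{i,m₁+m₂+1}(t)` satisfy the
Kolmogorov backward equations in integral form: if `(pᵢ)` is nondecreasing and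
`λp₁ ≥ ζ`, then `p_{i,m₁+m₂+1}(t)` is nondecreasing in `i ∈ {1,…,m₁+m₂+1}` for every
`t > 0`. -/
theorem stmt18 (m₁ m₂ : ℕ) (hm₁ : 1 ≤ m₁) (hm₂ : 1 ≤ m₂)
    (lam ζ : ℝ) (hζ : 0 ≤ ζ) (hlam : ζ < lam)
    (p : ℕ → ℝ)
    (hp01 : ∀ i, 1 ≤ i → i ≤ m₂ - 1 → p i ∈ Set.Icc (0 : ℝ) 1)
    (hpmono : ∀ i j, 1 ≤ i → i ≤ j → j ≤ m₂ - 1 → p i ≤ p j)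
    (hp1 : ζ ≤ lam * p 1)
    (P : ℕ → ℝ → ℝ)
    (hPabs : ∀ t, P (m₁ + m₂ + 1) t = 1)
    (hPlast : ∀ t, P (m₁ + m₂) t = 1 - Real.exp (-(lam * t)))
    (hPX2 : ∀ i, m₁ + 1 ≤ i → i ≤ m₁ + m₂ - 1 → ∀ t,
      P i t = lam * ∫ u in (0 : ℝ)..t,
        Real.exp (lam * (u - t)) * ((1 - p (i - m₁)) * P (i + 1) u + p (i - m₁)))
    (hPX1 : ∀ i, 1 ≤ i → i ≤ m₁ → ∀ t,
      P i t = ∫ u in (0 : ℝ)..t,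
        Real.exp (lam * (u - t)) * (ζ + (lam - ζ) * P (i + 1) u)) :
    ∀ t, 0 < t → ∀ i j, 1 ≤ i → i ≤ j → j ≤ m₁ + m₂ + 1 → P i t ≤ P j t := by
  have hlam0 : 0 < lam := lt_of_le_of_lt hζ hlam
  -- rewrite X2 formula with lam inside the integral
  have hX2' : ∀ i, m₁ + 1 ≤ i → i ≤ m₁ + m₂ - 1 → ∀ t,
      P i t = ∫ u in (0:ℝ)..t, Real.exp (lam * (u - t)) *
        (lam * ((1 - p (i - m₁)) * P (i + 1) u + p (i - m₁))) := by
    intro i h1 h2 t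
    rw [hPX2 i h1 h2 t, ← intervalIntegral.integral_const_mul]
    congr 1; funext u; ring
  -- total integral of exp * lam
  have htot : ∀ t : ℝ, (∫ u in (0:ℝ)..t, Real.exp (lam * (u - t)) * lam)
      = 1 - Real.exp (-(lam * t)) := by
    intro t
    rw [intervalIntegral.integral_mul_const, aux_exp_int lam hlam0]
    field_simp
  have hlast' : ∀ t, P (m₁ + m₂) t
      = ∫ u in (0:ℝ)..t, Real.exp (lam * (u - t)) * lam := by
    intro t; rw [hPlast, htot]
  -- continuity and upper bound, backward induction
  have key : ∀ k j, j + k = m₁ + m₂ + 1 → 1 ≤ j →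
      Continuous (P j) ∧ ∀ u, 0 ≤ u → P j u ≤ 1 := by
    intro k
    induction k with
    | zero =>
      intro j hjk _
      have hje : j = m₁ + m₂ + 1 := by omega
      subst hje
      refine ⟨?_, fun u _ => le_of_eq (hPabs u)⟩
      have : P (m₁ + m₂ + 1) = fun _ => 1 := funext fun t => hPabs t
      rw [this]; exact continuous_const
    | succ k ih =>
      intro j hjk hj
      obtain ⟨hc, hb⟩ := ih (j+1) (by omega) (by omega)
      by_cases hX1 : j ≤ m₁
      · have hform : P j = fun t => Real.exp (-(lam*t)) * ∫ u in (0:ℝ)..t,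
            Real.exp (lam*u) * (ζ + (lam - ζ) * P (j+1) u) := by
          funext t; rw [hPX1 j hj hX1 t, aux_form]
        have hgc : Continuous (fun u => ζ + (lam - ζ) * P (j+1) u) :=
          continuous_const.add (continuous_const.mul hc)
        constructor
        · rw [hform]; exact aux_cont lam _ hgc
        · intro u hu
          rw [hPX1 j hj hX1 u]
          have hle : (∫ v in (0:ℝ)..u, Real.exp (lam * (v - u)) * (ζ + (lam - ζ) * P (j+1) v))
              ≤ ∫ v in (0:ℝ)..u, Real.exp (lam * (v - u)) * lam := by
            apply aux_mono lam _ _ hgc continuous_const u hu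
            intro v hv _
            have := hb v hv
            nlinarith [hlam.le]
          calc _ ≤ _ := hle
            _ = 1 - Real.exp (-(lam * u)) := htot u
            _ ≤ 1 := by have := Real.exp_pos (-(lam*u)); linarith
      · by_cases hlastc : j = m₁ + m₂
        · subst hlastc
          constructor
          · have : P (m₁ + m₂) = fun t => 1 - Real.exp (-(lam*t)) :=
              funext fun t => hPlast t
            rw [this]
            exact continuous_const.sub (Real.continuous_exp.comp (continuous_const.mul continuous_id).neg)
          · intro u _
            rw [hPlast]
            have := Real.exp_pos (-(lam*u)); linarith
        · have h1 : m₁ + 1 ≤ j := by omega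
          have h2 : j ≤ m₁ + m₂ - 1 := by omega
          have hpa := hp01 (j - m₁) (by omega) (by omega)
          have hgc : Continuous (fun u => lam * ((1 - p (j - m₁)) * P (j+1) u + p (j - m₁))) :=
            continuous_const.mul ((continuous_const.mul hc).add continuous_const)
          constructor
          · have hform : P j = fun t => Real.exp (-(lam*t)) * ∫ u in (0:ℝ)..t,
                Real.exp (lam*u) * (lam * ((1 - p (j - m₁)) * P (j+1) u + p (j - m₁))) := by
              funext t; rw [hX2' j h1 h2 t, aux_form]
            rw [hform]; exact aux_cont lam _ hgc
          · intro u hu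
            rw [hX2' j h1 h2 u]
            have hle : (∫ v in (0:ℝ)..u, Real.exp (lam * (v - u)) *
                  (lam * ((1 - p (j - m₁)) * P (j+1) v + p (j - m₁))))
                ≤ ∫ v in (0:ℝ)..u, Real.exp (lam * (v - u)) * lam := by
              apply aux_mono lam _ _ hgc continuous_const u hu
              intro v hv _
              have := hb v hv
              nlinarith [mul_nonneg (mul_nonneg hlam0.le (sub_nonneg.2 hpa.2)) (sub_nonneg.2 this)]
            calc _ ≤ _ := hle
              _ = 1 - Real.exp (-(lam * u)) := htot u
              _ ≤ 1 := by have := Real.exp_pos (-(lam*u)); linarith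
  -- adjacent monotonicity
  have adj : ∀ k j, 1 ≤ j → (j+1) + k = m₁ + m₂ + 1 → ∀ t, 0 ≤ t → P j t ≤ P (j+1) t := by
    intro k
    induction k with
    | zero =>
      intro j hj hjk t ht
      have hje : j = m₁ + m₂ := by omega
      subst hje
      rw [hPlast, hPabs]
      have := Real.exp_pos (-(lam*t)); linarith
    | succ k ih =>
      intro j hj hjk t ht
      have IH : ∀ u, 0 ≤ u → P (j+1) u ≤ P (j+1+1) u :=
        fun u hu => ih (j+1) (by omega) (by omega) u hu
      obtain ⟨hc1, hb1⟩ := key (m₁ + m₂ - j) (j+1) (by omega) (by omega)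
      obtain ⟨hc2, hb2⟩ := key (m₁ + m₂ - j - 1) (j+1+1) (by omega) (by omega)
      by_cases hcase : j + 1 ≤ m₁
      · -- both in X1
        rw [hPX1 j hj (by omega) t, hPX1 (j+1) (by omega) hcase t]
        apply aux_mono lam _ _ (continuous_const.add (continuous_const.mul hc1))
          (continuous_const.add (continuous_const.mul hc2)) t ht
        intro u hu _
        have := IH u hu
        simp only [Pi.add_apply, Pi.mul_apply]
        nlinarith [hlam.le]
      · by_cases hX1j : j ≤ m₁
        · -- boundary: j = m₁
          by_cases hm2 : m₂ = 1
          · -- j+1 = m₁ + m₂, the last transient state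
            have hje : j + 1 = m₁ + m₂ := by omega
            have hL : P (j+1) t = ∫ u in (0:ℝ)..t, Real.exp (lam * (u - t)) * lam := by
              rw [hje]; exact hlast' t
            rw [hPX1 j hj hX1j t, hL]
            apply aux_mono lam _ _ (continuous_const.add (continuous_const.mul hc1))
              continuous_const t ht
            intro u hu _
            have hb := hb1 u hu
            simp only [Pi.add_apply, Pi.mul_apply]
            nlinarith [hlam.le]
          · -- j+1 is the first X2 state
            have h1 : m₁ + 1 ≤ j + 1 := by omega
            have h2 : j + 1 ≤ m₁ + m₂ - 1 := by omega
            have hidx : j + 1 - m₁ = 1 := by omega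
            have hp1b := hp01 1 le_rfl (by omega)
            rw [hPX1 j hj hX1j t, hX2' (j+1) h1 h2 t, hidx]
            apply aux_mono lam _ _ (continuous_const.add (continuous_const.mul hc1))
              (continuous_const.mul ((continuous_const.mul hc2).add continuous_const)) t ht
            intro u hu _
            have hIH := IH u hu
            have hx1 := hb2 u hu
            simp only [Pi.add_apply, Pi.mul_apply]
            nlinarith [mul_nonneg (sub_nonneg.2 hp1) (sub_nonneg.2 hx1),
              mul_le_mul_of_nonneg_left hIH (sub_nonneg.2 hlam.le)]
        · -- j in X2
          have h1 : m₁ + 1 ≤ j := by omega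
          have h2 : j ≤ m₁ + m₂ - 1 := by omega
          have hpa := hp01 (j - m₁) (by omega) (by omega)
          by_cases hend : j + 1 = m₁ + m₂
          · have hL : P (j+1) t = ∫ u in (0:ℝ)..t, Real.exp (lam * (u - t)) * lam := by
              rw [hend]; exact hlast' t
            rw [hX2' j h1 h2 t, hL]
            apply aux_mono lam _ _
              (continuous_const.mul ((continuous_const.mul hc1).add continuous_const))
              continuous_const t ht
            intro u hu _
            have hb := hb1 u hu
            simp only [Pi.add_apply, Pi.mul_apply]
            nlinarith [mul_nonneg (mul_nonneg hlam0.le (sub_nonneg.2 hpa.2)) (sub_nonneg.2 hb)]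
          · have h1' : m₁ + 1 ≤ j + 1 := by omega
            have h2' : j + 1 ≤ m₁ + m₂ - 1 := by omega
            have hpb := hp01 (j + 1 - m₁) (by omega) (by omega)
            have hpab : p (j - m₁) ≤ p (j + 1 - m₁) :=
              hpmono (j - m₁) (j + 1 - m₁) (by omega) (by omega) (by omega)
            rw [hX2' j h1 h2 t, hX2' (j+1) h1' h2' t]
            apply aux_mono lam _ _
              (continuous_const.mul ((continuous_const.mul hc1).add continuous_const))
              (continuous_const.mul ((continuous_const.mul hc2).add continuous_const)) t ht
            intro u hu _
            have hIH := IH u hu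
            have hy1 := hb2 u hu
            apply mul_le_mul_of_nonneg_left _ hlam0.le
            simp only [Pi.add_apply, Pi.mul_apply]
            nlinarith [mul_nonneg (sub_nonneg.2 hpa.2) (sub_nonneg.2 hIH),
              mul_nonneg (sub_nonneg.2 hpab) (sub_nonneg.2 hy1)]
  -- chain
  intro t ht i j hi hij hj
  induction j, hij using Nat.le_induction with
  | base => exact le_refl _
  | succ n hn IHn =>
    have hn' : n ≤ m₁ + m₂ + 1 := by omega
    have step : P n t ≤ P (n+1) t :=
      adj (m₁ + m₂ + 1 - (n+1)) n (le_trans hi hn) (by omega) t ht.le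
    exact le_trans (IHn hn') step
end
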